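/- arXiv:1803.07763 — 2 statements merged into one kernel-verified Lean document; each statement's English description precedes it below -/
import Mathlib

section
/- Let a := 1 − η with η ≤ 10^{−5}, b := 3/10, and suppose k ≥ 160, θ* ∈ E with ‖θ*‖_E < 1 and ‖θ*‖₂ > a·δ, and that θ† ∈ E, U = [u₂ … u_k] with orthonormal columns, and upper-triangular H ∈ ℝ^{(k−1)×(k−1)} satisfy properties (a)–(e) of the packing lemma. Let V be an orthogonal matrix of right singular vectors of H, set m₁ := ⌊(k−1)/8⌋, m₂ := ⌊(k−1)/4⌋ and s := ρ·(k−1)/16 for a fixed ρ ∈ (0,1). Then there exists a collection 𝒯 of s-sized subsets of {m₁, …, m₂} such that: (a) |𝒯| ≥ C(⌊(k−1)/16⌋, s) (binomial coefficient); and (b) for each S ∈ 𝒯 there is a sign vector z^S ∈ {−1, 0, 1}^{k−1} whose nonzero coordinates are exactly those indexed by S, such that θ^S := θ† + (b·δ/√(32s))·U·H·V·z^S belongs to E and satisfies δ² ≤ ‖θ^S − θ*‖₂² ≤ (4/(1 − ‖θ*‖_E²))·δ². -/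
/-
Since `M θ†` is parallel to `u₁ ⊥ u_j`, the point `θ†` is `M`-orthogonal to every `u_j`, so
property (c) reads `‖θ†‖_E² + (bδ)² ‖U H e_i‖_E² ≤ 1` for every column. As `V` is orthogonal,
the columns of `H V` have the same total elliptical size as those of `H`, and Markov's inequality
leaves at least `(k-1)/16` columns of `U H V` in the window `[m₁, m₂]` with
`(bδ)² ‖·‖_E² ≤ 16 (1 - ‖θ†‖_E²)`; `𝒯` consists of the `s`-subsets of these. For `S ∈ 𝒯`,
choosing the signs greedily keeps `‖Σ_{i∈S} z_i (U H V)_i‖_E²` below the sum of the squared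
column sizes, which puts `θ^S` in `E`. Finally `θ† - θ*` is parallel to `u₁`, hence orthogonal to
the perturbation, whose squared Euclidean norm is `Σ_{i∈S} ν_i²` because
`(H V)ᵀ (H V) = diag(ν²)`; on the window property (e) confines `ν_i` to `[1/4, 5]`, and the two
distance bounds follow.
-/

open MeasureTheory ProbabilityTheory Metric Set Filter
open scoped BigOperators ENNReal NNReal RealInnerProductSpace Classical

noncomputable section

namespace GaussKol

/-- The standard Gaussian measure on `EuclideanSpace ℝ (Fin d)`. -/
def stdGaussian (d : ℕ) : Measure (EuclideanSpace ℝ (Fin d)) :=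
  (Measure.pi fun _ : Fin d => gaussianReal 0 1).map
    (MeasurableEquiv.toLp 2 (Fin d → ℝ))

/-- The Gaussian width of a set `S ⊆ ℝ^d`. -/
def gaussianWidth {d : ℕ} (S : Set (EuclideanSpace ℝ (Fin d))) : ℝ :=
  ∫ w, (⨆ u ∈ S, ⟪w, u⟫) ∂(stdGaussian d)

/-- The ellipse with aspect ratios `μ`. -/
def ellipse {d : ℕ} (μ : Fin d → ℝ) : Set (EuclideanSpace ℝ (Fin d)) :=
  {θ | ∑ j, θ j ^ 2 / μ j ≤ 1}

/-- The squared elliptical norm. -/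
def enormSq {d : ℕ} (μ : Fin d → ℝ) (θ : EuclideanSpace ℝ (Fin d)) : ℝ :=
  ∑ j, θ j ^ 2 / μ j

/-- The recentered ellipse `E_{θ*}`. -/
def shiftedEllipse {d : ℕ} (μ : Fin d → ℝ) (θs : EuclideanSpace ℝ (Fin d)) :
    Set (EuclideanSpace ℝ (Fin d)) :=
  (fun θ => θ - θs) '' ellipse μ

/-- Orthogonal projection onto a subspace, as a self-map of `ℝ^d`. -/
def projK {d : ℕ} (K : Submodule ℝ (EuclideanSpace ℝ (Fin d)))
    (x : EuclideanSpace ℝ (Fin d)) : EuclideanSpace ℝ (Fin d) :=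
  (K.orthogonalProjectionOnto x : EuclideanSpace ℝ (Fin d))

/-- The Kolmogorov `k`-width of a set `S ⊆ ℝ^d`. -/
def kolWidth {d : ℕ} (k : ℕ) (S : Set (EuclideanSpace ℝ (Fin d))) : ℝ :=
  ⨅ K : {K : Submodule ℝ (EuclideanSpace ℝ (Fin d)) // Module.finrank ℝ K = k},
    ⨆ θ ∈ S, ‖θ - projK K.1 θ‖

/-- The critical dimension `k(θ*, δ)`. -/
def critDim {d : ℕ} (η : ℝ) (μ : Fin d → ℝ) (θs : EuclideanSpace ℝ (Fin d)) (δ : ℝ) : ℕ :=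
  sInf {k : ℕ | 1 ≤ k ∧ k ≤ d ∧
    kolWidth k (shiftedEllipse μ θs ∩ closedBall 0 ((1 - η) * δ)) ≤ (9 / 10) * δ}

/-- The set `Γ(θ*, δ, Π_k)`. -/
def Gam {d : ℕ} (μ : Fin d → ℝ) (θs : EuclideanSpace ℝ (Fin d)) (δ : ℝ)
    (K : Submodule ℝ (EuclideanSpace ℝ (Fin d))) : Set (Fin d → ℝ) :=
  {γ | (∀ i, 0 < γ i) ∧
    ∀ Δ ∈ shiftedEllipse μ θs ∩ closedBall 0 δ,
      ∑ i, (Δ i - projK K Δ i) ^ 2 / γ i ≤ 1}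

/-- The function `Φ`. -/
def Phi {d : ℕ} (η : ℝ) (μ : Fin d → ℝ) (θs : EuclideanSpace ℝ (Fin d)) (δ : ℝ) : ℝ :=
  if ‖θs‖ / (1 - η) < δ then 1
  else min 1 (sInf {r : ℝ | 0 ≤ r ∧
    δ ^ 2 ≤ ((1 - η) ^ 2)⁻¹ * ∑ i, r ^ 2 * θs i ^ 2 / (r + μ i) ^ 2})

/-- `Φ⁻¹(x)`: the largest `δ > 0` with `Φ(δ) ≤ x` (equal to `∞` when unbounded). -/
def PhiInv {d : ℕ} (η : ℝ) (μ : Fin d → ℝ) (θs : EuclideanSpace ℝ (Fin d)) (x : ℝ) : ℝ≥0∞ :=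
  ⨆ (δ : ℝ) (_ : 0 < δ ∧ Phi η μ θs δ ≤ x), ENNReal.ofReal δ

/-- The `ε`-packing number of `S` in Euclidean distance. -/
def packingNumber {d : ℕ} (ε : ℝ) (S : Set (EuclideanSpace ℝ (Fin d))) : ℕ :=
  sSup {n : ℕ | ∃ T : Finset (EuclideanSpace ℝ (Fin d)),
    ↑T ⊆ S ∧ (∀ x ∈ T, ∀ y ∈ T, x ≠ y → ε < dist x y) ∧ T.card = n}

/-- Regularity of the ellipse at `θ*`, with explicit constant `c`. -/
def regularAtWith {d : ℕ} (η : ℝ) (μ : Fin d → ℝ) (θs : EuclideanSpace ℝ (Fin d))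
    (c : ℝ) : Prop :=
  ∀ δ : ℝ, 0 < δ →
    ∃ K : Submodule ℝ (EuclideanSpace ℝ (Fin d)),
      Module.finrank ℝ K = critDim η μ θs δ ∧
      (⨆ θ ∈ shiftedEllipse μ θs ∩ closedBall 0 ((1 - η) * δ), ‖θ - projK K θ‖)
        ≤ kolWidth (critDim η μ θs δ) (shiftedEllipse μ θs ∩ closedBall 0 ((1 - η) * δ)) ∧
      sInf ((fun γ : Fin d → ℝ => ∑ i, γ i) '' Gam μ θs δ K)
        ≤ c * δ ^ 2 * critDim η μ θs δ

/-- The minimax risk of estimation over the ellipse with noise level `σ`. -/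
def minimaxRisk (d : ℕ) (μ : Fin d → ℝ) (σ : ℝ) : ℝ :=
  ⨅ est : {f : EuclideanSpace ℝ (Fin d) → EuclideanSpace ℝ (Fin d) // Measurable f},
    ⨆ θs ∈ ellipse μ, ∫ w, ‖est.1 (θs + σ • w) - θs‖ ^ 2 ∂(stdGaussian d)

end GaussKol

open GaussKol Matrix

open Finset

/-- Greedy choice: each new sign makes the cross term with the partial sum nonpositive. -/
theorem LinearMap.BilinForm.exists_signs_apply_sum_le {R M ι : Type*} [Field R] [LinearOrder R]
    [IsStrictOrderedRing R] [AddCommGroup M] [Module R M] [DecidableEq ι]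
    (B : LinearMap.BilinForm R M) (x : ι → M) (S : Finset ι) :
    ∃ z : ι → R, (∀ i, z i = -1 ∨ z i = 0 ∨ z i = 1) ∧ (∀ i, z i ≠ 0 ↔ i ∈ S) ∧
      B (∑ i ∈ S, z i • x i) (∑ i ∈ S, z i • x i) ≤ ∑ i ∈ S, B (x i) (x i) := by
  induction S using Finset.induction with
  | empty => exact ⟨0, by simp, by simp, by simp⟩
  | @insert a S ha ih =>
    obtain ⟨z, hz, hzS, hle⟩ := ih
    set y := ∑ i ∈ S, z i • x i
    set σ : R := if B y (x a) + B (x a) y ≤ 0 then 1 else -1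
    have hσ : σ ^ 2 = 1 ∧ σ * (B y (x a) + B (x a) y) ≤ 0 := by
      by_cases h : B y (x a) + B (x a) y ≤ 0
      · simp only [σ, if_pos h]; constructor <;> linarith
      · simp only [σ, if_neg h]; constructor <;> linarith
    have hrest : ∑ i ∈ S, Function.update z a σ i • x i = y :=
      sum_congr rfl fun i hi => by rw [Function.update_of_ne (ne_of_mem_of_not_mem hi ha)]
    refine ⟨Function.update z a σ, fun i => ?_, fun i => ?_, ?_⟩
    · rcases eq_or_ne i a with rfl | h
      · by_cases h : B y (x i) + B (x i) y ≤ 0 <;> simp [σ, h]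
      · simpa [h] using hz i
    · rcases eq_or_ne i a with rfl | h
      · by_cases h : B y (x i) + B (x i) y ≤ 0 <;> simp [σ, h]
      · simpa [h] using hzS i
    · rw [sum_insert ha, sum_insert ha, Function.update_self, hrest]
      have hexp : B (σ • x a + y) (σ • x a + y)
          = σ ^ 2 * B (x a) (x a) + σ * (B y (x a) + B (x a) y) + B y y := by
        simp only [LinearMap.BilinForm.add_left, LinearMap.BilinForm.add_right,
          LinearMap.BilinForm.smul_left, LinearMap.BilinForm.smul_right]
        ring
      rw [hexp, hσ.1]
      linarith [hσ.2]

theorem Finset.card_filter_lt_le_of_sum_le {ι : Type*} (s : Finset ι) {f : ι → ℝ} {t r : ℝ}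
    (hf : ∀ i ∈ s, 0 ≤ f i) (ht : 0 ≤ t) (hr : 0 ≤ r) (hsum : ∑ i ∈ s, f i ≤ r * t) :
    (#{i ∈ s | t < f i} : ℝ) ≤ r := by
  set F := {i ∈ s | t < f i}
  rcases F.eq_empty_or_nonempty with hF | ⟨i₀, hi₀⟩
  · simpa [hF] using hr
  have hlt : #F * t < ∑ i ∈ F, f i := by
    rw [← nsmul_eq_mul, ← sum_const]
    exact sum_lt_sum (fun i hi => (mem_filter.1 hi).2.le) ⟨i₀, hi₀, (mem_filter.1 hi₀).2⟩
  have hsub : ∑ i ∈ F, f i ≤ ∑ i ∈ s, f i :=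
    sum_le_sum_of_subset_of_nonneg (filter_subset _ _) fun i hi _ => hf i hi
  nlinarith

section Columns

variable {R M m n : Type*} [CommRing R] [AddCommGroup M] [Module R M] [Fintype m] [Fintype n]

theorem Matrix.sum_mulVec_smul (A : Matrix m n R) (z : n → R) (u : m → M) :
    ∑ j, (A *ᵥ z) j • u j = ∑ i, z i • ∑ j, A j i • u j := by
  simp only [Matrix.mulVec, dotProduct, sum_smul, smul_sum, smul_smul, mul_comm]
  exact sum_comm

theorem Matrix.transpose_mul_mul_self_eq_of_eq_conj [DecidableEq n] {A : Matrix m n R}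
    {V D : Matrix n n R} (hV : Vᵀ * V = 1) (hA : Aᵀ * A = V * D * Vᵀ) :
    (A * V)ᵀ * (A * V) = D := by
  rw [Matrix.transpose_mul, Matrix.mul_assoc, ← Matrix.mul_assoc Aᵀ, hA]
  simp only [Matrix.mul_assoc, hV, Matrix.mul_one]
  rw [← Matrix.mul_assoc, hV, Matrix.one_mul]

theorem LinearMap.BilinForm.sum_apply_col (B : LinearMap.BilinForm R M) (A : Matrix m n R)
    (u : m → M) :
    ∑ i, B (∑ l, A l i • u l) (∑ l, A l i • u l) = ∑ l, ∑ l', (A * Aᵀ) l l' * B (u l) (u l') := by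
  simp only [map_sum, map_smul, LinearMap.sum_apply, LinearMap.smul_apply, smul_eq_mul,
    Matrix.mul_apply, Matrix.transpose_apply, sum_mul, mul_sum]
  rw [sum_comm, sum_congr rfl fun _ _ => sum_comm, sum_comm]
  exact sum_congr rfl fun l _ => sum_congr rfl fun l' _ => sum_congr rfl fun i _ => by ring

theorem LinearMap.BilinForm.sum_apply_col_mul_of_mul_transpose_eq_one [DecidableEq n]
    (B : LinearMap.BilinForm R M) (A : Matrix m n R) {V : Matrix n n R} (hV : V * Vᵀ = 1)
    (u : m → M) :
    ∑ i, B (∑ l, (A * V) l i • u l) (∑ l, (A * V) l i • u l)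
      = ∑ i, B (∑ l, A l i • u l) (∑ l, A l i • u l) := by
  have : A * V * (A * V)ᵀ = A * Aᵀ := by
    rw [Matrix.transpose_mul, Matrix.mul_assoc, ← Matrix.mul_assoc V, hV, Matrix.one_mul]
  rw [sum_apply_col, sum_apply_col, this]

end Columns

theorem sum_mul_sq_eq_sum_of_sign {ι : Type*} [Fintype ι] {z : ι → ℝ} {S : Finset ι}
    (hz : ∀ i, z i = -1 ∨ z i = 0 ∨ z i = 1) (hzS : ∀ i, z i ≠ 0 ↔ i ∈ S) (w : ι → ℝ) :
    ∑ i, w i * z i ^ 2 = ∑ i ∈ S, w i := by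
  rw [← sum_subset (subset_univ S) fun i _ hi => by rw [not_ne_iff.1 ((hzS i).not.2 hi)]; ring]
  refine sum_congr rfl fun i hi => ?_
  rcases hz i with h | h | h
  · rw [h]; ring
  · exact absurd h ((hzS i).2 hi)
  · rw [h]; ring

section Orthonormal

variable {E m n : Type*} [NormedAddCommGroup E] [InnerProductSpace ℝ E] [Fintype m] [Fintype n]
  [DecidableEq n] {u : m → E} {A : Matrix m n ℝ} {w : n → ℝ}

theorem Orthonormal.norm_sum_mulVec_smul_sq (hu : Orthonormal ℝ u)
    (hA : Aᵀ * A = Matrix.diagonal w) (z : n → ℝ) :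
    ‖∑ j, (A *ᵥ z) j • u j‖ ^ 2 = ∑ i, w i * z i ^ 2 := by
  rw [← real_inner_self_eq_norm_sq, hu.inner_sum]
  change (A *ᵥ z) ⬝ᵥ (A *ᵥ z) = _
  rw [Matrix.dotProduct_mulVec, ← Matrix.mulVec_transpose, Matrix.mulVec_mulVec, hA]
  simp only [dotProduct, Matrix.mulVec_diagonal]
  exact sum_congr rfl fun i _ => by ring

theorem Orthonormal.norm_sum_mulVec_smul_sq_mem_Icc (hu : Orthonormal ℝ u)
    (hA : Aᵀ * A = Matrix.diagonal w) {z : n → ℝ} {S : Finset n}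
    (hz : ∀ i, z i = -1 ∨ z i = 0 ∨ z i = 1) (hzS : ∀ i, z i ≠ 0 ↔ i ∈ S) {α β : ℝ}
    (hw : ∀ i ∈ S, α ≤ w i ∧ w i ≤ β) :
    ‖∑ j, (A *ᵥ z) j • u j‖ ^ 2 ∈ Set.Icc (#S * α) (#S * β) := by
  rw [hu.norm_sum_mulVec_smul_sq hA, sum_mul_sq_eq_sum_of_sign hz hzS]
  have hlow := card_nsmul_le_sum S _ _ fun i hi => (hw i hi).1
  have hup := sum_le_card_nsmul S _ _ fun i hi => (hw i hi).2
  rw [nsmul_eq_mul] at hlow hup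
  exact ⟨hlow, hup⟩

end Orthonormal

namespace GaussKol

/-- Markov's inequality discards at most `n/16` indices, and the (one-based) window
`[n/8, n/4]` holds `n/4 - n/8 + 1 ≥ 2 (n/16)` of them. -/
theorem exists_subset_window_le_of_sum_le {n : ℕ} (hn : 8 ≤ n) {D : Fin n → ℝ} {T : ℝ}
    (hD : ∀ i, 0 ≤ D i) (hT : 0 ≤ T) (hsum : ∑ i, D i ≤ n / 16 * T) :
    ∃ G : Finset (Fin n), n / 16 ≤ #G ∧
      ∀ i ∈ G, (n / 8 ≤ (i : ℕ) + 1 ∧ (i : ℕ) + 1 ≤ n / 4) ∧ D i ≤ T := by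
  have hbad : 16 * #{i | T < D i} ≤ n := by
    have := card_filter_lt_le_of_sum_le univ (fun i _ => hD i) hT (by positivity) hsum
    exact_mod_cast (by push_cast; linarith : ((16 * #{i | T < D i} : ℕ) : ℝ) ≤ n)
  set W : Finset (Fin n) :=
    (Finset.Icc (n / 8 - 1) (n / 4 - 1)).attachFin fun x hx => by rw [Finset.mem_Icc] at hx; omega
  have hW : #W = n / 4 - n / 8 + 1 := by
    rw [card_attachFin, Nat.card_Icc]; omega
  have hsplit : #{i ∈ W | D i ≤ T} + #{i ∈ W | ¬D i ≤ T} = #W :=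
    card_filter_add_card_filter_not _
  have hbad' : #{i ∈ W | ¬D i ≤ T} ≤ #{i | T < D i} :=
    card_le_card fun i hi => by simpa using (mem_filter.1 hi).2
  refine ⟨{i ∈ W | D i ≤ T}, by omega, fun i hi => ?_⟩
  obtain ⟨hiW, hiT⟩ := mem_filter.1 hi
  rw [mem_attachFin, Finset.mem_Icc] at hiW
  exact ⟨by omega, hiT⟩

variable {d : ℕ}

def ellipseForm (μ : Fin d → ℝ) : LinearMap.BilinForm ℝ (EuclideanSpace ℝ (Fin d)) :=
  LinearMap.mk₂ ℝ (fun x y => ∑ j, x j * y j / μ j)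
    (fun x x' y => by simp only [PiLp.add_apply, add_mul, add_div, sum_add_distrib])
    (fun c x y => by simp only [PiLp.smul_apply, smul_eq_mul, mul_sum, mul_assoc, mul_div_assoc])
    (fun x y y' => by simp only [PiLp.add_apply, mul_add, add_div, sum_add_distrib])
    (fun c x y => by
      simp only [PiLp.smul_apply, smul_eq_mul, mul_sum]
      exact sum_congr rfl fun j _ => by ring)

section EllipseForm

variable (μ : Fin d → ℝ)

theorem ellipseForm_apply (x y : EuclideanSpace ℝ (Fin d)) :
    ellipseForm μ x y = ∑ j, x j * y j / μ j := rfl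

theorem ellipseForm_comm (x y : EuclideanSpace ℝ (Fin d)) :
    ellipseForm μ x y = ellipseForm μ y x := by
  simp only [ellipseForm_apply, mul_comm]

theorem enormSq_eq_ellipseForm (x : EuclideanSpace ℝ (Fin d)) :
    enormSq μ x = ellipseForm μ x x := by
  simp only [enormSq, ellipseForm_apply, sq]

theorem enormSq_smul (c : ℝ) (x : EuclideanSpace ℝ (Fin d)) :
    enormSq μ (c • x) = c ^ 2 * enormSq μ x := by
  simp only [enormSq_eq_ellipseForm, map_smul, LinearMap.smul_apply, smul_eq_mul]
  ring

theorem enormSq_add_of_ellipseForm_eq_zero {x y : EuclideanSpace ℝ (Fin d)}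
    (h : ellipseForm μ x y = 0) : enormSq μ (x + y) = enormSq μ x + enormSq μ y := by
  simp only [enormSq_eq_ellipseForm, map_add, LinearMap.add_apply, h, ellipseForm_comm μ y x]
  ring

theorem ellipseForm_eq_mul_inner {θ v : EuclideanSpace ℝ (Fin d)} {c : ℝ}
    (h : ∀ i, θ i / μ i = c * v i) (w : EuclideanSpace ℝ (Fin d)) :
    ellipseForm μ θ w = c * ⟪v, w⟫ := by
  simp only [ellipseForm_apply, PiLp.inner_apply, RCLike.inner_apply, conj_trivial, mul_sum]
  exact sum_congr rfl fun j _ => by rw [mul_div_right_comm, h]; ring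

end EllipseForm

variable {μ : Fin d → ℝ}

theorem enormSq_nonneg (hμ : ∀ i, 0 < μ i) (x : EuclideanSpace ℝ (Fin d)) : 0 ≤ enormSq μ x :=
  sum_nonneg fun j _ => div_nonneg (sq_nonneg _) (hμ j).le

theorem add_smul_sum_mem_ellipse {ι : Type*} {θ : EuclideanSpace ℝ (Fin d)} (hθ : θ ∈ ellipse μ)
    {y : ι → EuclideanSpace ℝ (Fin d)} {S : Finset ι} (hy : ∀ i ∈ S, ellipseForm μ θ (y i) = 0)
    {m r : ℝ} (hm : 0 < m)
    (hyS : ∀ i ∈ S, r ^ 2 * enormSq μ (y i) ≤ m * (1 - enormSq μ θ)) {z : ι → ℝ}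
    (hz : enormSq μ (∑ i ∈ S, z i • y i) ≤ ∑ i ∈ S, enormSq μ (y i)) :
    θ + (r / √(m * #S)) • ∑ i ∈ S, z i • y i ∈ ellipse μ := by
  rcases S.eq_empty_or_nonempty with rfl | hS
  · simpa using hθ
  have hS' : (0 : ℝ) < #S := by exact_mod_cast hS.card_pos
  set c := r / √(m * #S)
  have hc : c ^ 2 * (m * #S) = r ^ 2 := by
    rw [div_pow, Real.sq_sqrt (by positivity), div_mul_cancel₀ _ (by positivity)]
  have hscaled : m * #S * (c ^ 2 * ∑ i ∈ S, enormSq μ (y i)) ≤ m * #S * (1 - enormSq μ θ) :=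
    calc m * #S * (c ^ 2 * ∑ i ∈ S, enormSq μ (y i)) = ∑ i ∈ S, r ^ 2 * enormSq μ (y i) := by
          rw [← hc, mul_sum, mul_sum]; exact sum_congr rfl fun i _ => by ring
      _ ≤ ∑ _i ∈ S, m * (1 - enormSq μ θ) := sum_le_sum hyS
      _ = m * #S * (1 - enormSq μ θ) := by rw [sum_const, nsmul_eq_mul]; ring
  have horth : ellipseForm μ θ (c • ∑ i ∈ S, z i • y i) = 0 := by
    simp only [map_smul, map_sum, smul_eq_mul]
    rw [sum_eq_zero fun i hi => by rw [hy i hi, mul_zero], mul_zero]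
  show enormSq μ _ ≤ 1
  rw [enormSq_add_of_ellipseForm_eq_zero μ horth, enormSq_smul]
  nlinarith [mul_le_mul_of_nonneg_left hz (sq_nonneg c),
    le_of_mul_le_mul_left hscaled (by positivity)]

theorem exists_window_subset_enormSq_col_le {n : ℕ} (hn : 8 ≤ n) (hμ : ∀ i, 0 < μ i)
    {θ : EuclideanSpace ℝ (Fin d)} (hθ : θ ∈ ellipse μ) {u : Fin n → EuclideanSpace ℝ (Fin d)}
    (hθu : ∀ j, ellipseForm μ θ (u j) = 0) {H V : Matrix (Fin n) (Fin n) ℝ} (hV : V * Vᵀ = 1)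
    {b : ℝ} (hc : ∀ i, θ + b • ∑ j, H j i • u j ∈ ellipse μ) :
    ∃ G : Finset (Fin n), n / 16 ≤ #G ∧ ∀ i ∈ G, (n / 8 ≤ (i : ℕ) + 1 ∧ (i : ℕ) + 1 ≤ n / 4) ∧
      b ^ 2 * enormSq μ (∑ j, (H * V) j i • u j) ≤ 16 * (1 - enormSq μ θ) := by
  have hcol : ∀ i, b ^ 2 * enormSq μ (∑ j, H j i • u j) ≤ 1 - enormSq μ θ := fun i => by
    have hi : enormSq μ (θ + b • ∑ j, H j i • u j) ≤ 1 := hc i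
    rw [enormSq_add_of_ellipseForm_eq_zero μ (by simp [map_sum, hθu]), enormSq_smul] at hi
    linarith
  have hsum : ∑ i, b ^ 2 * enormSq μ (∑ j, (H * V) j i • u j)
      ≤ n / 16 * (16 * (1 - enormSq μ θ)) :=
    calc ∑ i, b ^ 2 * enormSq μ (∑ j, (H * V) j i • u j)
        = ∑ i, b ^ 2 * enormSq μ (∑ j, H j i • u j) := by
          simp only [← mul_sum, enormSq_eq_ellipseForm,
            (ellipseForm μ).sum_apply_col_mul_of_mul_transpose_eq_one H hV]
      _ ≤ ∑ _i : Fin n, (1 - enormSq μ θ) := sum_le_sum fun i _ => hcol i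
      _ = n / 16 * (16 * (1 - enormSq μ θ)) := by
          simp only [sum_const, card_univ, Fintype.card_fin, nsmul_eq_mul]; ring
  exact exists_subset_window_le_of_sum_le hn
    (fun i => mul_nonneg (sq_nonneg b) (enormSq_nonneg hμ _))
    (by linarith [show enormSq μ θ ≤ 1 from hθ]) hsum

theorem sq_mem_Icc_of_mem_window {k t : ℕ} (hk : 17 ≤ k) {η ν : ℝ} (hη0 : 0 ≤ η) (hη1 : η ≤ 1)
    (ht : (k - 1) / 8 ≤ t + 1 ∧ t + 1 ≤ (k - 1) / 4)
    (hup : ν ≤ (1 - η) / (3 * (3 / 10)) * √(((k : ℝ) - 1) / (t + 1)))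
    (hlow : 1 ≤ t → 1 - t / ((k : ℝ) - 1) -
      √(((1 - η) ^ 2 - 9 * (3 / 10) ^ 2) / (9 * (3 / 10) ^ 2)) ≤ ν) :
    1 / 16 ≤ ν ^ 2 ∧ ν ^ 2 ≤ 25 := by
  have hkR : ((k - 1 : ℕ) : ℝ) = (k : ℝ) - 1 := by rw [Nat.cast_sub (by omega), Nat.cast_one]
  have h4 : ((4 * t + 4 : ℕ) : ℝ) ≤ ((k - 1 : ℕ) : ℝ) := by exact_mod_cast (by omega)
  have h16 : ((k - 1 : ℕ) : ℝ) ≤ ((16 * t + 16 : ℕ) : ℝ) := by exact_mod_cast (by omega)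
  push_cast [hkR] at h4 h16
  have hsqrt_low : √(((1 - η) ^ 2 - 9 * (3 / 10) ^ 2) / (9 * (3 / 10) ^ 2)) ≤ 1 / 2 :=
    (Real.sqrt_le_left (by norm_num)).2 (by rw [div_le_iff₀ (by norm_num)]; nlinarith)
  have hfrac : (t : ℝ) / ((k : ℝ) - 1) ≤ 1 / 4 := by
    rw [div_le_iff₀ (by linarith)]; linarith
  have hν_low : 1 / 4 ≤ ν := by linarith [hlow (by omega)]
  have hsqrt_up : √(((k : ℝ) - 1) / (t + 1)) ≤ 4 :=
    (Real.sqrt_le_left (by norm_num)).2 (by rw [div_le_iff₀ (by positivity)]; linarith)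
  have hν_up : ν ≤ 10 / 9 * 4 :=
    hup.trans (mul_le_mul (by rw [div_le_iff₀ (by norm_num)]; linarith) hsqrt_up
      (Real.sqrt_nonneg _) (by norm_num))
  constructor <;> nlinarith

theorem norm_add_smul_sub_sq_mem_Icc {E : Type*} [NormedAddCommGroup E] [InnerProductSpace ℝ E]
    {θd θs P : E} {η δ : ℝ} {s : ℕ} (hη0 : 0 ≤ η) (hη1 : η ≤ 1e-5) (hs : 0 < s)
    (hperp : ⟪θd - θs, P⟫ = 0) (hb : ‖θd - θs‖ = (1 - η) * δ)
    (hP : ‖P‖ ^ 2 ∈ Set.Icc ((s : ℝ) * (1 / 16)) (s * 25)) :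
    ‖θd + (3 / 10 * δ / √(32 * s)) • P - θs‖ ^ 2 ∈ Set.Icc (δ ^ 2) (2 * δ ^ 2) := by
  have hs' : (0 : ℝ) < s := by exact_mod_cast hs
  have hpyth : ‖θd + (3 / 10 * δ / √(32 * s)) • P - θs‖ ^ 2
      = ((1 - η) * δ) ^ 2 + 9 / 100 * δ ^ 2 * (‖P‖ ^ 2 / (32 * s)) := by
    rw [show θd + (3 / 10 * δ / √(32 * s)) • P - θs = (θd - θs) + (3 / 10 * δ / √(32 * s)) • P
        by abel, norm_add_sq_real, inner_smul_right, hperp, norm_smul, hb, Real.norm_eq_abs,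
      mul_pow _ ‖P‖, sq_abs, div_pow, Real.sq_sqrt (by positivity)]
    ring
  have hlow : 1 / 512 ≤ ‖P‖ ^ 2 / (32 * s) := by
    rw [le_div_iff₀ (by positivity)]; linarith [hP.1]
  have hup : ‖P‖ ^ 2 / (32 * s) ≤ 25 / 32 := by
    rw [div_le_iff₀ (by positivity)]; linarith [hP.2]
  have ha : 1 - 2e-5 ≤ (1 - η) ^ 2 ∧ (1 - η) ^ 2 ≤ 1 := by constructor <;> nlinarith
  rw [hpyth, mul_pow]
  constructor <;> nlinarith [sq_nonneg δ, mul_le_mul_of_nonneg_left hlow (sq_nonneg δ),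
    mul_le_mul_of_nonneg_left hup (sq_nonneg δ), mul_le_mul_of_nonneg_right ha.1 (sq_nonneg δ),
    mul_le_mul_of_nonneg_right ha.2 (sq_nonneg δ)]

end GaussKol

theorem sparse_perturbation_lemma_general {d k : ℕ} (hk : 160 ≤ k)
    (η : ℝ) (hη0 : 0 < η) (hη1 : η ≤ 1e-5)
    (μ : Fin d → ℝ) (hμpos : ∀ i, 0 < μ i)
    (δ : ℝ)
    (θs : EuclideanSpace ℝ (Fin d))
    (hθsE : enormSq μ θs < 1)
    (θd u1 : EuclideanSpace ℝ (Fin d))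
    (u : Fin (k - 1) → EuclideanSpace ℝ (Fin d))
    (H V : Matrix (Fin (k - 1)) (Fin (k - 1)) ℝ)
    (ν : Fin (k - 1) → ℝ)
    (hθd : θd ∈ ellipse μ)
    (hu : Orthonormal ℝ u) (hu1u : ∀ j, ⟪u1, u j⟫ = 0)
    (hV : Vᵀ * V = 1)
    (hSVD : Hᵀ * H = V * Matrix.diagonal (fun t => ν t ^ 2) * Vᵀ)
    -- property (a)
    (ha : ∃ s t : ℝ, (∀ i, θd i / μ i = s * u1 i) ∧ θd - θs = t • u1)
    -- property (b)
    (hb : ‖θd - θs‖ = (1 - η) * δ)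
    -- property (c)
    (hc : ∀ i, θd + (3 / 10 * δ) • ∑ j, H j i • u j ∈ ellipse μ ∧
               θd - (3 / 10 * δ) • ∑ j, H j i • u j ∈ ellipse μ)
    -- property (e)
    (he1 : ∀ t : Fin (k - 1),
      ν t ≤ (1 - η) / (3 * (3 / 10)) * Real.sqrt (((k : ℝ) - 1) / ((t : ℕ) + 1)))
    (he2 : ∀ t : Fin (k - 1), 1 ≤ (t : ℕ) →
      1 - (t : ℕ) / ((k : ℝ) - 1) -
          Real.sqrt (((1 - η) ^ 2 - 9 * (3 / 10) ^ 2) / (9 * (3 / 10) ^ 2)) ≤ ν t)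
    (ρ : ℝ) (hρ0 : 0 < ρ)
    (s : ℕ) (hs : (s : ℝ) = ρ * ((k : ℝ) - 1) / 16) :
    ∃ 𝒯 : Finset (Finset (Fin (k - 1))),
      -- `𝒯` consists of `s`-sized subsets of `{m₁, …, m₂}` (1-indexed coordinates)
      (∀ S ∈ 𝒯, S.card = s ∧
        ∀ i ∈ S, (k - 1) / 8 ≤ (i : ℕ) + 1 ∧ (i : ℕ) + 1 ≤ (k - 1) / 4) ∧
      -- (a): cardinality bound
      Nat.choose ((k - 1) / 16) s ≤ 𝒯.card ∧
      -- (b): valid sign vectors with the stated properties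
      (∀ S ∈ 𝒯, ∃ z : Fin (k - 1) → ℝ,
        (∀ i, z i = -1 ∨ z i = 0 ∨ z i = 1) ∧
        (∀ i, z i ≠ 0 ↔ i ∈ S) ∧
        θd + (3 / 10 * δ / Real.sqrt (32 * s)) • ∑ j, (H * V).mulVec z j • u j ∈ ellipse μ ∧
        δ ^ 2 ≤ ‖(θd + (3 / 10 * δ / Real.sqrt (32 * s)) •
            ∑ j, (H * V).mulVec z j • u j) - θs‖ ^ 2 ∧
        ‖(θd + (3 / 10 * δ / Real.sqrt (32 * s)) •
            ∑ j, (H * V).mulVec z j • u j) - θs‖ ^ 2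
          ≤ 4 / (1 - enormSq μ θs) * δ ^ 2) := by
  obtain ⟨s₀, t, hθd_dir, hθ_diff⟩ := ha
  have hθdu : ∀ j, ellipseForm μ θd (u j) = 0 := fun j => by
    rw [ellipseForm_eq_mul_inner μ hθd_dir, hu1u, mul_zero]
  obtain ⟨G, hGcard, hG⟩ := exists_window_subset_enormSq_col_le (by omega) hμpos hθd hθdu
    (mul_eq_one_comm.1 hV) fun i => (hc i).1
  have hs_pos : 0 < s := by
    have hk' : (160 : ℝ) ≤ k := by exact_mod_cast hk
    exact_mod_cast (show (0 : ℝ) < s by rw [hs]; exact div_pos (by nlinarith) (by norm_num))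
  refine ⟨G.powersetCard s, fun S hS => ?_, ?_, fun S hS => ?_⟩
  · obtain ⟨hSG, rfl⟩ := mem_powersetCard.1 hS
    exact ⟨rfl, fun i hi => (hG i (hSG hi)).1⟩
  · simpa using Nat.choose_le_choose s hGcard
  obtain ⟨hSG, rfl⟩ := mem_powersetCard.1 hS
  obtain ⟨z, hz, hzS, hzQ⟩ := LinearMap.BilinForm.exists_signs_apply_sum_le (ellipseForm μ)
    (fun i => ∑ j, (H * V) j i • u j) S
  have hP : ∑ j, ((H * V) *ᵥ z) j • u j = ∑ i ∈ S, z i • ∑ j, (H * V) j i • u j := by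
    rw [Matrix.sum_mulVec_smul, sum_subset (subset_univ S) fun i _ hi => by
      rw [not_ne_iff.1 ((hzS i).not.2 hi), zero_smul]]
  have hnormP := hu.norm_sum_mulVec_smul_sq_mem_Icc
    (Matrix.transpose_mul_mul_self_eq_of_eq_conj hV hSVD) hz hzS fun i hi =>
      sq_mem_Icc_of_mem_window (by omega) hη0.le (by linarith) (hG i (hSG hi)).1 (he1 i) (he2 i)
  have hperp : ⟪θd - θs, ∑ j, ((H * V) *ᵥ z) j • u j⟫ = 0 := by
    simp [hθ_diff, inner_sum, inner_smul_right, real_inner_smul_left, hu1u]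
  obtain ⟨hlow, hup⟩ := norm_add_smul_sub_sq_mem_Icc hη0.le hη1 hs_pos hperp hb hnormP
  refine ⟨z, hz, hzS, ?_, hlow, hup.trans ?_⟩
  · rw [hP]
    have hθd' : enormSq μ θd ≤ 1 := hθd
    exact add_smul_sum_mem_ellipse hθd (fun i _ => by simp [map_sum, hθdu]) (m := 32)
      (by norm_num) (fun i hi => (hG i (hSG hi)).2.trans (by linarith))
      (by simpa only [enormSq_eq_ellipseForm] using hzQ)
  · have := enormSq_nonneg hμpos θs
    rw [div_mul_eq_mul_div, le_div_iff₀ (by linarith)]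
    nlinarith [sq_nonneg δ]

/-- **Lemma 2 (sparse perturbation lemma).**
Let `a := 1 − η` with `η ≤ 10⁻⁵`, `b := 3/10`, `k ≥ 160`, `θ* ∈ E` with `‖θ*‖_E < 1` and
`‖θ*‖₂ > a δ`, and suppose `θ† ∈ E`, `u₁` together with the orthonormal columns `u` of `U`,
and the upper-triangular `H` (with right-singular-vector matrix `V` and ordered singular
values `ν`) satisfy properties (a)–(e) of the packing lemma.  With `m₁ := ⌊(k−1)/8⌋`,
`m₂ := ⌊(k−1)/4⌋` and `s := ρ (k−1)/16` (`ρ ∈ (0,1)` fixed), there exists a collection `𝒯`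
of `s`-sized subsets of `{m₁, …, m₂}` with `|𝒯| ≥ binom(⌊(k−1)/16⌋, s)` such that for each
`S ∈ 𝒯` there is an `S`-valid sign vector `z^S` for which
`θ^S := θ† + (b δ / √(32 s)) U H V z^S` lies in `E` and satisfies
`δ² ≤ ‖θ^S − θ*‖₂² ≤ (4 / (1 − ‖θ*‖_E²)) δ²`. -/
theorem sparse_perturbation_lemma {d k : ℕ} (hk : 160 ≤ k)
    (η : ℝ) (hη0 : 0 < η) (hη1 : η ≤ 1e-5)
    (μ : Fin d → ℝ) (hμpos : ∀ i, 0 < μ i) (hμmono : ∀ i j : Fin d, i ≤ j → μ j ≤ μ i)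
    (δ : ℝ) (hδ : 0 < δ)
    (θs : EuclideanSpace ℝ (Fin d)) (hθs : θs ∈ ellipse μ)
    (hθsE : enormSq μ θs < 1) (hfar : (1 - η) * δ < ‖θs‖)
    (θd u1 : EuclideanSpace ℝ (Fin d))
    (u : Fin (k - 1) → EuclideanSpace ℝ (Fin d))
    (H V : Matrix (Fin (k - 1)) (Fin (k - 1)) ℝ)
    (ν : Fin (k - 1) → ℝ)
    (hθd : θd ∈ ellipse μ)
    (hu1 : ‖u1‖ = 1) (hu : Orthonormal ℝ u) (hu1u : ∀ j, ⟪u1, u j⟫ = 0)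
    (hH : Matrix.BlockTriangular H id) (hHdiag : ∀ i, H i i = 1)
    (hν : Antitone ν) (hν0 : ∀ t, 0 ≤ ν t) (hV : Vᵀ * V = 1)
    (hSVD : Hᵀ * H = V * Matrix.diagonal (fun t => ν t ^ 2) * Vᵀ)
    -- property (a)
    (ha : ∃ s t : ℝ, (∀ i, θd i / μ i = s * u1 i) ∧ θd - θs = t • u1)
    -- property (b)
    (hb : ‖θd - θs‖ = (1 - η) * δ)
    -- property (c)
    (hc : ∀ i, θd + (3 / 10 * δ) • ∑ j, H j i • u j ∈ ellipse μ ∧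
               θd - (3 / 10 * δ) • ∑ j, H j i • u j ∈ ellipse μ)
    -- property (d)
    (hd : enormSq μ θd ≤ enormSq μ θs)
    -- property (e)
    (he1 : ∀ t : Fin (k - 1),
      ν t ≤ (1 - η) / (3 * (3 / 10)) * Real.sqrt (((k : ℝ) - 1) / ((t : ℕ) + 1)))
    (he2 : ∀ t : Fin (k - 1), 1 ≤ (t : ℕ) →
      1 - (t : ℕ) / ((k : ℝ) - 1) -
          Real.sqrt (((1 - η) ^ 2 - 9 * (3 / 10) ^ 2) / (9 * (3 / 10) ^ 2)) ≤ ν t)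
    (ρ : ℝ) (hρ0 : 0 < ρ) (hρ1 : ρ < 1)
    (s : ℕ) (hs : (s : ℝ) = ρ * ((k : ℝ) - 1) / 16) :
    ∃ 𝒯 : Finset (Finset (Fin (k - 1))),
      -- `𝒯` consists of `s`-sized subsets of `{m₁, …, m₂}` (1-indexed coordinates)
      (∀ S ∈ 𝒯, S.card = s ∧
        ∀ i ∈ S, (k - 1) / 8 ≤ (i : ℕ) + 1 ∧ (i : ℕ) + 1 ≤ (k - 1) / 4) ∧
      -- (a): cardinality bound
      Nat.choose ((k - 1) / 16) s ≤ 𝒯.card ∧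
      -- (b): valid sign vectors with the stated properties
      (∀ S ∈ 𝒯, ∃ z : Fin (k - 1) → ℝ,
        (∀ i, z i = -1 ∨ z i = 0 ∨ z i = 1) ∧
        (∀ i, z i ≠ 0 ↔ i ∈ S) ∧
        θd + (3 / 10 * δ / Real.sqrt (32 * s)) • ∑ j, (H * V).mulVec z j • u j ∈ ellipse μ ∧
        δ ^ 2 ≤ ‖(θd + (3 / 10 * δ / Real.sqrt (32 * s)) •
            ∑ j, (H * V).mulVec z j • u j) - θs‖ ^ 2 ∧
        ‖(θd + (3 / 10 * δ / Real.sqrt (32 * s)) •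
            ∑ j, (H * V).mulVec z j • u j) - θs‖ ^ 2
          ≤ 4 / (1 - enormSq μ θs) * δ ^ 2) :=
  sparse_perturbation_lemma_general hk η hη0 hη1 μ hμpos δ θs hθsE θd u1 u H V ν hθd hu hu1u hV hSVD
    ha hb hc he1 he2 ρ hρ0 s hs
end
end

section
/- For every θ* ∈ E and every δ with 0 < δ < min{ Φ^{−1}((‖θ*‖_E^{−1} − 1)²), √μ₁ }, the critical dimensions satisfy k(θ*, δ) ≤ k(0, δ/2) + 1. -/
open MeasureTheory ProbabilityTheory Metric Set Filter
open scoped BigOperators ENNReal NNReal RealInnerProductSpace Classical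

noncomputable section

open GaussKol

/-!
The ellipse `E` is convex and symmetric, so `E - θ* ⊆ 2 • E` for `θ* ∈ E`, and hence
`E_{θ*} ∩ B(r) ⊆ 2 • (E ∩ B(r / 2))`. Residuals of orthogonal projections scale linearly, so a
`k`-dimensional subspace witnessing `W_k(E ∩ B((1 - η)δ/2)) ≤ (9/10)(δ/2)` also witnesses
`W_k(E_{θ*} ∩ B((1 - η)δ)) ≤ (9/10)δ`. Thus `k(θ*, δ) ≤ k(0, δ/2)`.
-/

open scoped Pointwise

namespace GaussKol

variable {d : ℕ}

lemma norm_sub_projK_le (K : Submodule ℝ (EuclideanSpace ℝ (Fin d)))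
    (x : EuclideanSpace ℝ (Fin d)) : ‖x - projK K x‖ ≤ ‖x‖ := by
  have hres : x - projK K x = Kᗮ.starProjection x := by
    rw [Submodule.starProjection_orthogonal, projK, ← Submodule.starProjection_apply]
    rfl
  exact hres ▸ Kᗮ.norm_starProjection_apply_le x

lemma projK_smul (K : Submodule ℝ (EuclideanSpace ℝ (Fin d))) (c : ℝ)
    (x : EuclideanSpace ℝ (Fin d)) : projK K (c • x) = c • projK K x := by
  simp only [projK, map_smul, Submodule.coe_smul]

lemma exists_submodule_finrank_eq {k : ℕ} (hk : k ≤ d) :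
    ∃ K : Submodule ℝ (EuclideanSpace ℝ (Fin d)), Module.finrank ℝ K = k := by
  let e : Fin k → EuclideanSpace ℝ (Fin d) :=
    fun i => EuclideanSpace.basisFun (Fin d) ℝ (Fin.castLE hk i)
  have he : LinearIndependent ℝ e :=
    (EuclideanSpace.basisFun (Fin d) ℝ).toBasis.linearIndependent.comp _
      (Fin.castLE_injective hk)
  exact ⟨Submodule.span ℝ (Set.range e), by rw [finrank_span_eq_card he, Fintype.card_fin]⟩

lemma bddAbove_range_norm_sub_projK {S : Set (EuclideanSpace ℝ (Fin d))}
    (hS : Bornology.IsBounded S) (K : Submodule ℝ (EuclideanSpace ℝ (Fin d))) :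
    BddAbove (Set.range fun θ => ⨆ _ : θ ∈ S, ‖θ - projK K θ‖) := by
  obtain ⟨R, hR⟩ := hS.subset_closedBall 0
  refine ⟨max R 0, ?_⟩
  rintro _ ⟨θ, rfl⟩
  refine Real.iSup_le (fun hθ => ?_) (le_max_right _ _)
  calc ‖θ - projK K θ‖ ≤ ‖θ‖ := norm_sub_projK_le K θ
    _ ≤ R := mem_closedBall_zero_iff.mp (hR hθ)
    _ ≤ max R 0 := le_max_left _ _

lemma iSup_norm_sub_projK_nonneg (S : Set (EuclideanSpace ℝ (Fin d)))
    (K : Submodule ℝ (EuclideanSpace ℝ (Fin d))) : 0 ≤ ⨆ θ ∈ S, ‖θ - projK K θ‖ :=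
  Real.iSup_nonneg fun _ => Real.iSup_nonneg fun _ => norm_nonneg _

lemma iSup_norm_sub_projK_le_of_subset_smul {S T : Set (EuclideanSpace ℝ (Fin d))}
    (hT : Bornology.IsBounded T) {c : ℝ} (hc : 0 ≤ c) (hST : S ⊆ c • T)
    (K : Submodule ℝ (EuclideanSpace ℝ (Fin d))) :
    ⨆ θ ∈ S, ‖θ - projK K θ‖ ≤ c * ⨆ θ ∈ T, ‖θ - projK K θ‖ := by
  have hbound : 0 ≤ c * ⨆ θ ∈ T, ‖θ - projK K θ‖ :=
    mul_nonneg hc (iSup_norm_sub_projK_nonneg T K)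
  refine Real.iSup_le (fun x => Real.iSup_le (fun hx => ?_) hbound) hbound
  obtain ⟨y, hy, rfl⟩ := hST hx
  rw [projK_smul, ← smul_sub, norm_smul, Real.norm_of_nonneg hc]
  gcongr
  exact le_ciSup_of_le (bddAbove_range_norm_sub_projK hT K) y (by rw [ciSup_pos hy])

lemma bddBelow_iSup_norm_sub_projK (S : Set (EuclideanSpace ℝ (Fin d))) (k : ℕ) :
    BddBelow (Set.range fun K : {K : Submodule ℝ (EuclideanSpace ℝ (Fin d)) //
      Module.finrank ℝ K = k} => ⨆ θ ∈ S, ‖θ - projK K.1 θ‖) := by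
  refine ⟨0, ?_⟩
  rintro _ ⟨K, rfl⟩
  exact iSup_norm_sub_projK_nonneg S K.1

lemma kolWidth_nonneg (k : ℕ) (S : Set (EuclideanSpace ℝ (Fin d))) : 0 ≤ kolWidth k S :=
  Real.iInf_nonneg fun K => iSup_norm_sub_projK_nonneg S K.1

lemma kolWidth_le_of_subset_smul {k : ℕ} (hk : k ≤ d) {S T : Set (EuclideanSpace ℝ (Fin d))}
    (hT : Bornology.IsBounded T) {c : ℝ} (hc : 0 ≤ c) (hST : S ⊆ c • T) :
    kolWidth k S ≤ c * kolWidth k T := by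
  obtain ⟨K₀, hK₀⟩ := exists_submodule_finrank_eq hk
  have : Nonempty {K : Submodule ℝ (EuclideanSpace ℝ (Fin d)) // Module.finrank ℝ K = k} :=
    ⟨⟨K₀, hK₀⟩⟩
  rw [kolWidth, kolWidth, Real.mul_iInf_of_nonneg hc]
  exact le_ciInf fun K => (ciInf_le (bddBelow_iSup_norm_sub_projK S k) K).trans
    (iSup_norm_sub_projK_le_of_subset_smul hT hc hST K.1)

lemma kolWidth_dim (S : Set (EuclideanSpace ℝ (Fin d))) : kolWidth d S = 0 := by
  refine le_antisymm ?_ (kolWidth_nonneg d S)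
  have hproj : ∀ θ, projK (⊤ : Submodule ℝ (EuclideanSpace ℝ (Fin d))) θ = θ := fun θ =>
    Submodule.starProjection_eq_self_iff.mpr Submodule.mem_top
  refine (ciInf_le (bddBelow_iSup_norm_sub_projK S d) ⟨⊤, by simp⟩).trans ?_
  simp [hproj]

lemma critDim_spec (η : ℝ) (μ : Fin d → ℝ) (θs : EuclideanSpace ℝ (Fin d)) (hd : 0 < d)
    {δ : ℝ} (hδ : 0 ≤ δ) :
    1 ≤ critDim η μ θs δ ∧ critDim η μ θs δ ≤ d ∧
      kolWidth (critDim η μ θs δ) (shiftedEllipse μ θs ∩ closedBall 0 ((1 - η) * δ))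
        ≤ 9 / 10 * δ :=
  Nat.sInf_mem (s := {k | 1 ≤ k ∧ k ≤ d ∧
    kolWidth k (shiftedEllipse μ θs ∩ closedBall 0 ((1 - η) * δ)) ≤ 9 / 10 * δ})
    ⟨d, hd, le_rfl, by rw [kolWidth_dim]; positivity⟩

lemma critDim_le {η : ℝ} {μ : Fin d → ℝ} {θs : EuclideanSpace ℝ (Fin d)} {δ : ℝ} {k : ℕ}
    (hk : 1 ≤ k) (hkd : k ≤ d)
    (hw : kolWidth k (shiftedEllipse μ θs ∩ closedBall 0 ((1 - η) * δ)) ≤ 9 / 10 * δ) :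
    critDim η μ θs δ ≤ k :=
  Nat.sInf_le ⟨hk, hkd, hw⟩

lemma shiftedEllipse_zero (μ : Fin d → ℝ) : shiftedEllipse μ 0 = ellipse μ := by
  simp [shiftedEllipse]

lemma shiftedEllipse_subset_two_smul {μ : Fin d → ℝ} (hμ : ∀ i, 0 ≤ μ i)
    {θs : EuclideanSpace ℝ (Fin d)} (hθs : θs ∈ ellipse μ) :
    shiftedEllipse μ θs ⊆ (2 : ℝ) • ellipse μ := by
  rintro _ ⟨θ, hθ, rfl⟩
  refine ⟨(1 / 2 : ℝ) • (θ - θs), ?_, by simp [smul_smul]⟩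
  -- convexity and symmetry of the ellipse, coordinatewise: `((a - b) / 2)² ≤ (a² + b²) / 2`
  have hterm : ∀ j, ((1 / 2 : ℝ) • (θ - θs)) j ^ 2 / μ j ≤
      (θ j ^ 2 / μ j + θs j ^ 2 / μ j) / 2 := fun j => by
    have hcoord : ((1 / 2 : ℝ) • (θ - θs)) j = (θ j - θs j) / 2 := by
      simp only [PiLp.smul_apply, PiLp.sub_apply, smul_eq_mul]
      ring
    rw [hcoord, ← add_div, div_right_comm]
    gcongr
    · exact hμ j
    · nlinarith [sq_nonneg (θ j + θs j)]
  calc ∑ j, ((1 / 2 : ℝ) • (θ - θs)) j ^ 2 / μ j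
      ≤ ∑ j, (θ j ^ 2 / μ j + θs j ^ 2 / μ j) / 2 := Finset.sum_le_sum fun j _ => hterm j
    _ = ((∑ j, θ j ^ 2 / μ j) + ∑ j, θs j ^ 2 / μ j) / 2 := by
      rw [← Finset.sum_div, Finset.sum_add_distrib]
    _ ≤ 1 := by
      have hθ' : ∑ j, θ j ^ 2 / μ j ≤ 1 := hθ
      have hθs' : ∑ j, θs j ^ 2 / μ j ≤ 1 := hθs
      linarith

lemma shiftedEllipse_inter_closedBall_subset {μ : Fin d → ℝ} (hμ : ∀ i, 0 ≤ μ i)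
    {θs : EuclideanSpace ℝ (Fin d)} (hθs : θs ∈ ellipse μ) (r : ℝ) :
    shiftedEllipse μ θs ∩ closedBall 0 r ⊆
      (2 : ℝ) • (shiftedEllipse μ 0 ∩ closedBall 0 (r / 2)) := by
  rw [smul_set_inter₀ two_ne_zero, shiftedEllipse_zero, smul_closedBall' two_ne_zero, smul_zero,
    Real.norm_two, mul_div_cancel₀ r two_ne_zero]
  exact inter_subset_inter_left _ (shiftedEllipse_subset_two_smul hμ hθs)

end GaussKol

theorem critDim_le_critDim_zero_general {d : ℕ} (η : ℝ)
    (μ : Fin d → ℝ) (hμpos : ∀ i, 0 < μ i)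
    (θs : EuclideanSpace ℝ (Fin d)) (hθs : θs ∈ ellipse μ)
    (hd : 0 < d) (δ : ℝ) (hδ : 0 < δ) :
    critDim η μ θs δ ≤ critDim η μ 0 (δ / 2) + 1 := by
  obtain ⟨hk₁, hkd, hwidth⟩ := critDim_spec η μ 0 hd (half_pos hδ).le
  refine (critDim_le hk₁ hkd ?_).trans (Nat.le_succ _)
  calc kolWidth _ (shiftedEllipse μ θs ∩ closedBall 0 ((1 - η) * δ))
      ≤ 2 * kolWidth (critDim η μ 0 (δ / 2))
          (shiftedEllipse μ 0 ∩ closedBall 0 ((1 - η) * δ / 2)) :=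
        kolWidth_le_of_subset_smul hkd (isBounded_closedBall.subset inter_subset_right)
          zero_le_two (shiftedEllipse_inter_closedBall_subset (fun i => (hμpos i).le) hθs _)
    _ ≤ 9 / 10 * δ := by
      rw [← mul_div_assoc] at hwidth
      linarith

/-- **Lemma 5 (comparison of critical dimensions).**
For every `θ* ∈ E` and every `δ ∈ (0, min{Φ⁻¹((‖θ*‖_E⁻¹ − 1)²), √μ₁})`,
the critical dimensions satisfy `k(θ*, δ) ≤ k(0, δ/2) + 1`. -/
theorem critDim_le_critDim_zero {d : ℕ} (η : ℝ) (hη0 : 0 < η) (hη1 : η < 0.1)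
    (μ : Fin d → ℝ) (hμpos : ∀ i, 0 < μ i) (hμmono : ∀ i j : Fin d, i ≤ j → μ j ≤ μ i)
    (θs : EuclideanSpace ℝ (Fin d)) (hθs : θs ∈ ellipse μ)
    (hd : 0 < d) (δ : ℝ) (hδ : 0 < δ)
    (hδμ : δ < Real.sqrt (μ ⟨0, hd⟩))
    (hδΦ : ENNReal.ofReal δ <
      PhiInv η μ θs (((Real.sqrt (enormSq μ θs))⁻¹ - 1) ^ 2)) :
    critDim η μ θs δ ≤ critDim η μ 0 (δ / 2) + 1 :=
  critDim_le_critDim_zero_general η μ hμpos θs hθs hd δ hδ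
end
end
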